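/- Let $\Phi : (0,\infty) \to \mathbb{R}$ be smooth and set $f_r(t) := (-1)^{r+1}\Phi^{(r)}(t)$, and assume $f_r(t) \ge 0$ for all $r \ge 1$, $t > 0$. Set $V(t) = \Phi(2t) - \Phi(t)$ and $\Phi_r(t) = \frac{t^r}{r!} f_r(t)$. Then for every $r \ge 1$ and $t > 0$, $\Phi_r(t) \le \frac{2^{r(r+1)/2}}{r!} V(2^{-r} t)$. -/

import Mathlib

open Real Set

theorem stmt3 (Φ : ℝ → ℝ) (hΦ : ContDiffOn ℝ (⊤ : ℕ∞) Φ (Set.Ioi (0 : ℝ)))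
    (f : ℕ → ℝ → ℝ)
    (hf : ∀ r : ℕ, ∀ t : ℝ, f r t = (-1 : ℝ) ^ (r + 1) * iteratedDerivWithin r Φ (Set.Ioi (0 : ℝ)) t)
    (halt : ∀ r : ℕ, 1 ≤ r → ∀ t : ℝ, 0 < t → 0 ≤ f r t)
    (V : ℝ → ℝ) (hV : ∀ t : ℝ, 0 < t → V t = Φ (2 * t) - Φ t)
    (Φr : ℕ → ℝ → ℝ)
    (hΦr : ∀ r : ℕ, ∀ t : ℝ, 0 < t → Φr r t = t ^ r / (r.factorial : ℝ) * f r t) :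
    ∀ r : ℕ, 1 ≤ r → ∀ t : ℝ, 0 < t →
      Φr r t ≤ (2 : ℝ) ^ (r * (r + 1) / 2) / (r.factorial : ℝ) * V ((2 : ℝ) ^ (-(r : ℤ)) * t) := by
  have hSopen : IsOpen (Set.Ioi (0:ℝ)) := isOpen_Ioi
  have hSu : UniqueDiffOn ℝ (Set.Ioi (0:ℝ)) := hSopen.uniqueDiffOn
  -- derivative of iterated derivatives
  have hderiv : ∀ (n : ℕ) (x : ℝ), x ∈ Set.Ioi (0:ℝ) →
      HasDerivAt (iteratedDerivWithin n Φ (Set.Ioi (0:ℝ)))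
        (iteratedDerivWithin (n+1) Φ (Set.Ioi (0:ℝ)) x) x := by
    intro n x hx
    have hdiff : DifferentiableOn ℝ (iteratedDerivWithin n Φ (Set.Ioi (0:ℝ))) (Set.Ioi (0:ℝ)) :=
      hΦ.differentiableOn_iteratedDerivWithin (by exact_mod_cast lt_top_iff_ne_top.2 (by simp)) hSu
    have h1 : DifferentiableAt ℝ (iteratedDerivWithin n Φ (Set.Ioi (0:ℝ))) x :=
      hdiff.differentiableAt (hSopen.mem_nhds hx)
    have h2 := h1.hasDerivAt
    rwa [iteratedDerivWithin_succ, derivWithin_of_isOpen hSopen hx]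
  -- derivative of f n
  have hfderiv : ∀ (n : ℕ) (x : ℝ), x ∈ Set.Ioi (0:ℝ) →
      HasDerivAt (f n) (-(f (n+1) x)) x := by
    intro n x hx
    have hfn : f n = fun t => (-1:ℝ)^(n+1) * iteratedDerivWithin n Φ (Set.Ioi (0:ℝ)) t :=
      funext fun t => hf n t
    rw [hfn]
    have := (hderiv n x hx).const_mul ((-1:ℝ)^(n+1))
    have h' : -(f (n+1) x) = (-1:ℝ)^(n+1) * iteratedDerivWithin (n+1) Φ (Set.Ioi (0:ℝ)) x := by
      rw [hf (n+1) x]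
      ring_nf
    rw [h']
    exact this
  -- f n is antitone on Ioi 0
  have hanti : ∀ n : ℕ, AntitoneOn (f n) (Set.Ioi (0:ℝ)) := by
    intro n
    apply antitoneOn_of_deriv_nonpos (convex_Ioi 0)
    · exact fun x hx => ((hfderiv n x hx).differentiableAt.continuousAt).continuousWithinAt
    · rw [interior_Ioi]
      exact fun x hx => (hfderiv n x hx).differentiableAt.differentiableWithinAt
    · rw [interior_Ioi]
      intro x hx
      rw [(hfderiv n x hx).deriv]
      simpa using halt (n+1) (by omega) x hx
  -- key MVT step
  have key : ∀ (n : ℕ) (s : ℝ), 0 < s → s * f (n+1) (2*s) ≤ f n s - f n (2*s) := by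
    intro n s hs
    have hlt : s < 2*s := by linarith
    have hsub : Set.Icc s (2*s) ⊆ Set.Ioi (0:ℝ) := fun x hx => lt_of_lt_of_le hs hx.1
    obtain ⟨c, hc, hceq⟩ := exists_hasDerivAt_eq_slope (f n) (fun x => -(f (n+1) x)) hlt
      (fun x hx => ((hfderiv n x (hsub hx)).differentiableAt.continuousAt).continuousWithinAt)
      (fun x hx => hfderiv n x (hsub (Set.mem_Icc_of_Ioo hx)))
    have hc0 : c ∈ Set.Ioi (0:ℝ) := lt_trans hs hc.1
    have h2s : (2*s) ∈ Set.Ioi (0:ℝ) := by simp; linarith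
    have hmono : f (n+1) (2*s) ≤ f (n+1) c := hanti (n+1) hc0 h2s (le_of_lt hc.2)
    have hss : (2*s - s) = s := by ring
    rw [hss] at hceq
    have : f n s - f n (2*s) = s * f (n+1) c := by
      field_simp at hceq
      linarith
    rw [this]
    exact mul_le_mul_of_nonneg_left hmono (le_of_lt hs)
  -- main induction
  have main : ∀ n : ℕ, 1 ≤ n → ∀ t : ℝ, 0 < t →
      t ^ n * f n t ≤ 2 ^ (n * (n+1) / 2) * V ((2:ℝ) ^ (-(n:ℤ)) * t) := by
    intro n
    induction n with
    | zero => omega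
    | succ m ih =>
      intro _ t ht
      have hs : (0:ℝ) < t/2 := by linarith
      have h2s : 2 * (t/2) = t := by ring
      have hkey := key m (t/2) hs
      rw [h2s] at hkey
      rcases Nat.eq_zero_or_pos m with hm | hm
      · subst hm
        -- base case: t * f 1 t ≤ 2 * V (t/2)
        have hf0 : ∀ x : ℝ, f 0 x = -Φ x := by
          intro x
          rw [hf 0 x, iteratedDerivWithin_zero]
          ring
        rw [hf0, hf0] at hkey
        norm_num at hkey ⊢
        have harg : (1/2 : ℝ) * t = t/2 := by ring
        rw [harg, hV (t/2) hs, h2s]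
        linarith
      · -- inductive step
        have ihm := ih hm (t/2) hs
        have hfm : 0 ≤ f m t := halt m hm t ht
        have hstep : (t/2) * f (m+1) t ≤ f m (t/2) := by linarith
        have htpow : (0:ℝ) ≤ t ^ m := le_of_lt (pow_pos ht m)
        have h1 : t ^ (m+1) * f (m+1) t ≤ 2 * t^m * f m (t/2) := by
          have := mul_le_mul_of_nonneg_left hstep htpow
          calc t ^ (m+1) * f (m+1) t = 2 * (t^m * ((t/2) * f (m+1) t)) := by ring
          _ ≤ 2 * (t^m * f m (t/2)) := by linarith
          _ = 2 * t^m * f m (t/2) := by ring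
        have h2 : 2 * t^m * f m (t/2) = 2^(m+1) * ((t/2)^m * f m (t/2)) := by
          rw [div_pow]
          field_simp
          ring
        have h3 : (2:ℝ)^(m+1) * ((t/2)^m * f m (t/2)) ≤
            2^(m+1) * (2 ^ (m * (m+1) / 2) * V ((2:ℝ) ^ (-(m:ℤ)) * (t/2))) := by
          apply mul_le_mul_of_nonneg_left ihm
          positivity
        have harg : (2:ℝ) ^ (-(m:ℤ)) * (t/2) = (2:ℝ) ^ (-((m:ℕ)+1:ℕ):ℤ) * t := by
          push_cast
          rw [neg_add, zpow_add₀ (by norm_num : (2:ℝ) ≠ 0)]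
          norm_num
          ring
        have hexp : (2:ℝ)^(m+1) * 2 ^ (m * (m+1) / 2) = 2 ^ ((m+1) * ((m+1)+1) / 2) := by
          rw [← pow_add]
          congr 1
          obtain ⟨k, hk⟩ := Nat.even_mul_succ_self m
          have h1 : (m+1) * ((m+1)+1) = m * (m+1) + 2*(m+1) := by ring
          omega
        calc t ^ (m+1) * f (m+1) t ≤ 2^(m+1) * ((t/2)^m * f m (t/2)) := by rw [← h2]; exact h1
        _ ≤ 2^(m+1) * (2 ^ (m * (m+1) / 2) * V ((2:ℝ) ^ (-(m:ℤ)) * (t/2))) := h3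
        _ = 2 ^ ((m+1) * ((m+1)+1) / 2) * V ((2:ℝ) ^ (-((m:ℕ)+1:ℕ):ℤ) * t) := by
            rw [harg, ← mul_assoc, hexp]
  -- conclude
  intro r hr t ht
  rw [hΦr r t ht]
  have hmain := main r hr t ht
  have hfac : (0:ℝ) < (r.factorial : ℝ) := by exact_mod_cast r.factorial_pos
  rw [div_mul_eq_mul_div, div_mul_eq_mul_div]
  gcongr
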